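/- arXiv:2405.03875 — 5 statements merged into one kernel-verified Lean document; each statement's English description precedes it below -/
import Mathlib

section
/- Let N be a finite set with |N| = n ≥ 3, and let S₁, S₂ ⊆ N be two subsets with S₁ ≠ S₂, S₁ ≠ ∅, S₂ ≠ ∅, S₁ ≠ N, and S₂ ≠ N. Let F⁽⁰⁾ denote the set of all utility functions v on N with v(S₁) ≥ v(S₂), and F⁽ᵃ⁾ the set of all utility functions v on N with v(S₁) < v(S₂). Then for every function h : ℝ^N → [0, 1], one has inf_{v ∈ F⁽⁰⁾} (1 − h(φ(v))) + inf_{v ∈ F⁽ᵃ⁾} h(φ(v)) ≤ 1. -/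
/-!
The Shapley map `v ↦ φ(v)` is linear, and it stays onto `ℝ^N` when restricted to games vanishing
on `∅`, `S₁` and `S₂`. Indeed the Shapley value of the point mass at `T` is `α 𝟙_T - β 𝟙` with
`α > 0` and `β ≥ 0` (and `β = 0` for `T = N`), so these point masses produce every indicator `𝟙_T`
with `T ∉ {S₁, S₂}`; for `n ≥ 3` the `2^(n-1)` pairs `(T, T ∪ {j})` with `j ∉ T` cannot all meet
`{S₁, S₂}`, so each basis vector `e_j = 𝟙_{T ∪ {j}} - 𝟙_T` is reached. Hence some game `v` has
`v(∅) = 0`, `v(S₁) < v(S₂)` and `φ(v) = 0 = φ(0)`; a test cannot tell `v` from the null game `0`,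
which lies in `F⁽⁰⁾`, so the two infima are at most `1 - h(0)` and `h(0)`.
-/

open Finset

/-- The Shapley value of point `i` under utility function `v` on the player set `ι`. -/
noncomputable def shapley {ι : Type*} [Fintype ι] [DecidableEq ι]
    (v : Finset ι → ℝ) (i : ι) : ℝ :=
  (Fintype.card ι : ℝ)⁻¹ *
    ∑ k ∈ Finset.Icc 1 (Fintype.card ι),
      ((Fintype.card ι - 1).choose (k - 1) : ℝ)⁻¹ *
        ∑ S ∈ (Finset.univ.erase i).powerset.filter (fun S => S.card = k - 1),
          (v (insert i S) - v S)

/-- The weight `s! (n - 1 - s)! / n!` of a marginal contribution to a coalition of size `s`. -/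
noncomputable def shapleyWeight (n s : ℕ) : ℝ := ((n : ℝ) * (n - 1).choose s)⁻¹

lemma shapleyWeight_pos {n s : ℕ} (hs : s < n) : 0 < shapleyWeight n s := by
  unfold shapleyWeight
  have : 0 < (n - 1).choose s := Nat.choose_pos (by omega)
  have : 0 < n := by omega
  positivity

lemma shapleyWeight_self (n : ℕ) : shapleyWeight n n = 0 := by
  rcases Nat.eq_zero_or_pos n with rfl | hn
  · simp [shapleyWeight]
  · simp [shapleyWeight, Nat.choose_eq_zero_of_lt (Nat.sub_lt hn one_pos)]

lemma shapleyWeight_nonneg (n s : ℕ) : 0 ≤ shapleyWeight n s := by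
  unfold shapleyWeight; positivity

section Shapley
variable {ι : Type*} [Fintype ι] [DecidableEq ι]

lemma shapley_eq_sum_powerset (v : Finset ι → ℝ) (i : ι) :
    shapley v i = ∑ S ∈ (univ.erase i).powerset,
      shapleyWeight (Fintype.card ι) S.card * (v (insert i S) - v S) := by
  have hmaps : ∀ S ∈ (univ.erase i).powerset, S.card + 1 ∈ Icc 1 (Fintype.card ι) := by
    intro S hS
    have := card_le_card (mem_powerset.mp hS)
    rw [card_erase_of_mem (mem_univ i), card_univ] at this
    have : 0 < Fintype.card ι := Fintype.card_pos_iff.mpr ⟨i⟩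
    simp only [mem_Icc]; omega
  rw [shapley, ← sum_fiberwise_of_maps_to hmaps, mul_sum]
  refine sum_congr rfl fun k hk => ?_
  have hk : 1 ≤ k := (mem_Icc.mp hk).1
  rw [← mul_assoc, mul_sum]
  refine sum_congr (filter_congr fun S _ => by omega) fun S hS => ?_
  rw [← (mem_filter.mp hS).2, Nat.add_sub_cancel, shapleyWeight, mul_inv]

noncomputable def shapleyLinearMap : (Finset ι → ℝ) →ₗ[ℝ] (ι → ℝ) where
  toFun := shapley
  map_add' v w := by
    ext i
    simp only [shapley_eq_sum_powerset, Pi.add_apply, add_sub_add_comm, mul_add, sum_add_distrib]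
  map_smul' c v := by
    ext i
    simp only [shapley_eq_sum_powerset, Pi.smul_apply, smul_eq_mul, RingHom.id_apply, mul_sum,
      ← mul_sub, mul_left_comm]

@[simp]
lemma shapleyLinearMap_apply (v : Finset ι → ℝ) : shapleyLinearMap v = shapley v := rfl

lemma shapley_single_apply (T : Finset ι) (i : ι) :
    shapley (Pi.single T 1) i = if i ∈ T then shapleyWeight (Fintype.card ι) (T.card - 1)
      else -shapleyWeight (Fintype.card ι) T.card := by
  set δ : Finset ι → ℝ := Pi.single T 1 with hδ
  rw [shapley_eq_sum_powerset]
  split_ifs with hi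
  · have hterm : ∀ S ∈ (univ.erase i).powerset,
        shapleyWeight (Fintype.card ι) S.card * (δ (insert i S) - δ S)
          = if S = T.erase i then shapleyWeight (Fintype.card ι) S.card else 0 := by
      intro S hS
      have hiS : i ∉ S := fun h => (mem_erase.mp (mem_powerset.mp hS h)).1 rfl
      have hST : S ≠ T := fun h => hiS (h ▸ hi)
      have hiff : insert i S = T ↔ S = T.erase i :=
        ⟨fun h => by rw [← h, erase_insert hiS], fun h => by rw [h, insert_erase hi]⟩
      simp only [hδ, Pi.single_apply, hST, if_false, sub_zero, hiff, mul_ite, mul_one, mul_zero]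
    have hmem : T.erase i ∈ (univ.erase i).powerset :=
      mem_powerset.mpr (erase_subset_erase i (subset_univ T))
    rw [sum_congr rfl hterm, sum_ite_eq', if_pos hmem, card_erase_of_mem hi]
  · have hterm : ∀ S ∈ (univ.erase i).powerset,
        shapleyWeight (Fintype.card ι) S.card * (δ (insert i S) - δ S)
          = -if S = T then shapleyWeight (Fintype.card ι) S.card else 0 := by
      intro S _
      have hiST : insert i S ≠ T := fun h => hi (h ▸ mem_insert_self i S)
      simp only [hδ, Pi.single_apply, hiST, if_false, zero_sub, mul_neg, mul_ite, mul_one, mul_zero]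
    have hmem : T ∈ (univ.erase i).powerset :=
      mem_powerset.mpr (subset_erase.mpr ⟨subset_univ T, hi⟩)
    rw [sum_congr rfl hterm, sum_neg_distrib, sum_ite_eq', if_pos hmem]

lemma shapley_single (T : Finset ι) :
    shapley (Pi.single T 1) =
      (shapleyWeight (Fintype.card ι) (T.card - 1) + shapleyWeight (Fintype.card ι) T.card) •
        (T : Set ι).indicator 1 - shapleyWeight (Fintype.card ι) T.card • 1 := by
  ext i
  rw [shapley_single_apply]
  by_cases hi : i ∈ T <;> simp [hi]

end Shapley

section Spanning
variable {ι R : Type*} [Fintype ι] [DecidableEq ι] [Ring R]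

lemma exists_notMem_and_insert_notMem (𝒜 : Finset (Finset ι)) (j : ι)
    (h𝒜 : 𝒜.card < 2 ^ (Fintype.card ι - 1)) :
    ∃ T : Finset ι, j ∉ T ∧ T ∉ 𝒜 ∧ insert j T ∉ 𝒜 := by
  have hlt : (𝒜.image (·.erase j)).card < ((univ.erase j).powerset).card := by
    rw [card_powerset, card_erase_of_mem (mem_univ j), card_univ]
    exact card_image_le.trans_lt h𝒜
  -- `T ∈ 𝒜` and `insert j T ∈ 𝒜` would both put `T = T.erase j` in this image.
  obtain ⟨T, hT, hTimage⟩ := exists_mem_notMem_of_card_lt_card hlt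
  have hjT : j ∉ T := fun h => (mem_erase.mp (mem_powerset.mp hT h)).1 rfl
  refine ⟨T, hjT, fun hT𝒜 => hTimage ?_, fun hT𝒜 => hTimage ?_⟩
  · exact mem_image.mpr ⟨T, hT𝒜, erase_eq_of_notMem hjT⟩
  · exact mem_image.mpr ⟨insert j T, hT𝒜, erase_insert hjT⟩

lemma Submodule.eq_top_of_forall_indicator_mem (hn : 3 ≤ Fintype.card ι) {M : Submodule R (ι → R)}
    (A B : Finset ι) (hM : ∀ T : Finset ι, T ≠ A → T ≠ B → (T : Set ι).indicator 1 ∈ M) :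
    M = ⊤ := by
  rw [eq_top_iff, ← (Pi.basisFun R ι).span_eq, Submodule.span_le]
  rintro _ ⟨j, rfl⟩
  have hcard : ({A, B} : Finset (Finset ι)).card < 2 ^ (Fintype.card ι - 1) :=
    calc _ ≤ 2 := card_le_two
      _ < 2 ^ 2 := by norm_num
      _ ≤ _ := Nat.pow_le_pow_right two_pos (by omega)
  obtain ⟨T, hjT, hT, hjT'⟩ := exists_notMem_and_insert_notMem {A, B} j hcard
  simp only [mem_insert, mem_singleton, not_or] at hT hjT'
  have hsingle : Pi.basisFun R ι j =
      ((insert j T : Finset ι) : Set ι).indicator 1 - (T : Set ι).indicator 1 := by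
    ext i
    by_cases hij : i = j
    · subst hij; simp [hjT]
    · simp [Set.indicator_apply, hij]
  rw [SetLike.mem_coe, hsingle]
  exact M.sub_mem (hM _ hjT'.1 hjT'.2) (hM _ hT.1 hT.2)

end Spanning

section Kernel
variable {ι : Type*} [Fintype ι] [DecidableEq ι] {S₁ S₂ : Finset ι}

lemma map_shapleyLinearMap_eq_top (hn : 3 ≤ Fintype.card ι) (h1N : S₁ ≠ univ) (h2N : S₂ ≠ univ) :
    (Submodule.pi {∅, S₁, S₂} fun _ => ⊥).map shapleyLinearMap = ⊤ := by
  set M := (Submodule.pi {∅, S₁, S₂} fun _ => ⊥).map shapleyLinearMap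
  have hsingle : ∀ T, T ≠ ∅ → T ≠ S₁ → T ≠ S₂ → shapley (Pi.single T 1) ∈ M := by
    intro T h0 h1 h2
    refine Submodule.mem_map_of_mem (Submodule.mem_pi.mpr ?_)
    rintro S (rfl | rfl | rfl) <;> simp [Ne.symm h0, Ne.symm h1, Ne.symm h2]
  have hone : (1 : ι → ℝ) ∈ M := by
    have h := shapley_single (univ : Finset ι)
    rw [card_univ, shapleyWeight_self, add_zero, zero_smul, sub_zero, coe_univ,
      Set.indicator_univ] at h
    have hpos := shapleyWeight_pos (Nat.sub_lt (by omega : 0 < Fintype.card ι) one_pos)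
    have huniv : (univ : Finset ι) ≠ ∅ := (card_pos.mp (by rw [card_univ]; omega)).ne_empty
    rw [← inv_smul_smul₀ hpos.ne' (1 : ι → ℝ), ← h]
    exact M.smul_mem _ (hsingle univ huniv h1N.symm h2N.symm)
  refine Submodule.eq_top_of_forall_indicator_mem hn S₁ S₂ fun T h1 h2 => ?_
  rcases T.eq_empty_or_nonempty with rfl | hT
  · rw [coe_empty, Set.indicator_empty]
    exact M.zero_mem
  have hcard : T.card - 1 < Fintype.card ι := by
    have := T.card_le_univ; have := hT.card_pos; omega
  have hpos : 0 < shapleyWeight (Fintype.card ι) (T.card - 1) +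
      shapleyWeight (Fintype.card ι) T.card :=
    add_pos_of_pos_of_nonneg (shapleyWeight_pos hcard) (shapleyWeight_nonneg _ _)
  have h := shapley_single T
  rw [eq_sub_iff_add_eq] at h
  rw [← inv_smul_smul₀ hpos.ne' ((T : Set ι).indicator 1), ← h]
  exact M.smul_mem _ (M.add_mem (hsingle T hT.ne_empty h1 h2) (M.smul_mem _ hone))

lemma exists_shapley_eq_zero (hn : 3 ≤ Fintype.card ι) (h12 : S₁ ≠ S₂) (h1 : S₁ ≠ ∅)
    (h2 : S₂ ≠ ∅) (h1N : S₁ ≠ univ) (h2N : S₂ ≠ univ) :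
    ∃ v : Finset ι → ℝ, v ∅ = 0 ∧ v S₁ < v S₂ ∧ shapley v = 0 := by
  set δ : Finset ι → (Finset ι → ℝ) := fun T => Pi.single T 1
  obtain ⟨u, hu, hφu⟩ : shapleyLinearMap (δ S₂ - δ S₁) ∈
      (Submodule.pi {∅, S₁, S₂} fun _ => ⊥).map shapleyLinearMap := by
    rw [map_shapleyLinearMap_eq_top hn h1N h2N]; exact Submodule.mem_top
  obtain ⟨hu0, hu1, hu2⟩ : u ∅ = 0 ∧ u S₁ = 0 ∧ u S₂ = 0 := by simpa using Submodule.mem_pi.mp hu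
  refine ⟨δ S₂ - δ S₁ - u, ?_, ?_, ?_⟩
  · simp [δ, Ne.symm h1, Ne.symm h2, hu0]
  · simp [δ, h12, Ne.symm h12, hu1, hu2]
  · rw [← shapleyLinearMap_apply, map_sub, hφu, sub_self]

end Kernel

/-- For any Shapley value-based hypothesis test `h : ℝ^N → [0,1]`, the sum of the true
negative rate (infimum of `1 - h(φ(v))` over utility functions in the null hypothesis class)
and the true positive rate (infimum of `h(φ(v))` over utility functions in the alternative
hypothesis class) is at most `1`. -/
theorem stmt_1 {ι : Type*} [Fintype ι] [DecidableEq ι]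
    (hn : 3 ≤ Fintype.card ι) (S₁ S₂ : Finset ι)
    (h12 : S₁ ≠ S₂) (h1 : S₁ ≠ ∅) (h2 : S₂ ≠ ∅)
    (h1N : S₁ ≠ Finset.univ) (h2N : S₂ ≠ Finset.univ)
    (h : (ι → ℝ) → ℝ) (hh : ∀ x, h x ∈ Set.Icc (0 : ℝ) 1) :
    sInf {r : ℝ | ∃ v : Finset ι → ℝ, v ∅ = 0 ∧ v S₂ ≤ v S₁ ∧ r = 1 - h (shapley v)} +
      sInf {r : ℝ | ∃ v : Finset ι → ℝ, v ∅ = 0 ∧ v S₁ < v S₂ ∧ r = h (shapley v)} ≤ 1 := by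
  obtain ⟨v, hv0, hlt, hv⟩ := exists_shapley_eq_zero hn h12 h1 h2 h1N h2N
  have hzero : shapley (0 : Finset ι → ℝ) = 0 := map_zero shapleyLinearMap
  have hnull : sInf {r : ℝ | ∃ v : Finset ι → ℝ, v ∅ = 0 ∧ v S₂ ≤ v S₁ ∧ r = 1 - h (shapley v)}
      ≤ 1 - h 0 := by
    refine csInf_le ⟨0, ?_⟩ ⟨0, rfl, le_rfl, by rw [hzero]⟩
    rintro _ ⟨w, -, -, rfl⟩
    linarith [(hh (shapley w)).2]
  have halt : sInf {r : ℝ | ∃ v : Finset ι → ℝ, v ∅ = 0 ∧ v S₁ < v S₂ ∧ r = h (shapley v)}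
      ≤ h 0 := by
    refine csInf_le ⟨0, ?_⟩ ⟨v, hv0, hlt, by rw [hv]⟩
    rintro _ ⟨w, -, -, rfl⟩
    exact (hh (shapley w)).1
  linarith
end

section
/- Let N be a finite set with |N| ≥ 3 and let S₁, S₂ ⊆ N satisfy S₁ ≠ S₂, S₁ ≠ ∅, S₂ ≠ ∅, S₁ ≠ N, and S₂ ≠ N. Then there exists a subset T ⊆ N with |T| ≥ 2 such that exactly one of the two conditions |T ∩ S₁| = 1 and |T ∩ S₂| = 1 holds. -/
/-!
Choose `x` in one set but not the other, say `x ∈ A \ B`. If `A` and `B` meet in `z`, then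
`T = {z, x}` meets `B` once and `A` twice. If they are disjoint, pick `y ∈ B`: when `B` has two
elements `T = insert x B` meets `A` once and `B` at least twice, symmetrically when `A` does; and
when `A = {x}`, `B = {y}`, the third point `w` of the ground set gives `T = {x, w}`, which meets
`A` once and `B` not at all.
-/

open Finset

section

variable {ι : Type*} [DecidableEq ι]

theorem card_insert_inter_eq_one_of_disjoint {A U : Finset ι} {y : ι} (hy : y ∈ A)
    (hU : Disjoint U A) : #(insert y U ∩ A) = 1 := by
  rw [insert_inter_of_mem hy, disjoint_iff_inter_eq_empty.1 hU, insert_empty, card_singleton]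

theorem exists_card_inter_eq_one_of_two_le_card {A B : Finset ι} (hAB : Disjoint A B) {x : ι}
    (hx : x ∈ A) (hB : 2 ≤ #B) :
    ∃ T : Finset ι, 2 ≤ #T ∧ #(T ∩ A) = 1 ∧ #(T ∩ B) ≠ 1 := by
  have hxB : x ∉ B := hAB.notMem_of_mem_left_finset hx
  refine ⟨insert x B, ?_, card_insert_inter_eq_one_of_disjoint hx hAB.symm, ?_⟩
  · exact hB.trans (card_le_card (subset_insert x B))
  · rw [insert_inter_of_notMem hxB, inter_self]
    omega

theorem exists_xor_card_inter_eq_one_of_disjoint [Fintype ι] (hcard : 3 ≤ Fintype.card ι)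
    {A B : Finset ι} (hAB : Disjoint A B) {x y : ι} (hx : x ∈ A) (hy : y ∈ B) :
    ∃ T : Finset ι, 2 ≤ #T ∧ Xor (#(T ∩ A) = 1) (#(T ∩ B) = 1) := by
  by_cases hB : 2 ≤ #B
  · obtain ⟨T, hT, hTA, hTB⟩ := exists_card_inter_eq_one_of_two_le_card hAB hx hB
    exact ⟨T, hT, Or.inl ⟨hTA, hTB⟩⟩
  by_cases hA : 2 ≤ #A
  · obtain ⟨T, hT, hTB, hTA⟩ := exists_card_inter_eq_one_of_two_le_card hAB.symm hy hA
    exact ⟨T, hT, Or.inr ⟨hTB, hTA⟩⟩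
  have hsmall : #(A ∪ B) < #(univ : Finset ι) := by
    have := card_union_le A B
    rw [card_univ]
    omega
  obtain ⟨w, -, hw⟩ := exists_mem_notMem_of_card_lt_card hsmall
  rw [mem_union, not_or] at hw
  have hxw : x ≠ w := ne_of_mem_of_not_mem hx hw.1
  have hTB : Disjoint {x, w} B := by
    simp [hw.2, hAB.notMem_of_mem_left_finset hx]
  refine ⟨{x, w}, (card_pair hxw).ge, Or.inl ⟨?_, ?_⟩⟩
  · exact card_insert_inter_eq_one_of_disjoint hx (disjoint_singleton_left.2 hw.1)
  · rw [disjoint_iff_inter_eq_empty.1 hTB, card_empty]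
    omega

theorem exists_xor_card_inter_eq_one_of_mem_sdiff [Fintype ι] (hcard : 3 ≤ Fintype.card ι)
    {A B : Finset ι} {x : ι} (hxA : x ∈ A) (hxB : x ∉ B) (hB : B.Nonempty) :
    ∃ T : Finset ι, 2 ≤ #T ∧ Xor (#(T ∩ A) = 1) (#(T ∩ B) = 1) := by
  by_cases hAB : (A ∩ B).Nonempty
  · obtain ⟨z, hz⟩ := hAB
    rw [mem_inter] at hz
    have hzx : z ≠ x := ne_of_mem_of_not_mem hz.2 hxB
    refine ⟨{z, x}, (card_pair hzx).ge, Or.inr ⟨?_, ?_⟩⟩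
    · exact card_insert_inter_eq_one_of_disjoint hz.2 (disjoint_singleton_left.2 hxB)
    · rw [inter_eq_left.2 (insert_subset hz.1 (singleton_subset_iff.2 hxA)), card_pair hzx]
      omega
  · obtain ⟨y, hy⟩ := hB
    exact exists_xor_card_inter_eq_one_of_disjoint hcard
      (disjoint_iff_inter_eq_empty.2 (not_nonempty_iff_eq_empty.1 hAB)) hxA hy

end

theorem stmt_5_general {ι : Type*} [Fintype ι] [DecidableEq ι]
    (hn : 3 ≤ Fintype.card ι) (S₁ S₂ : Finset ι)
    (h12 : S₁ ≠ S₂) (h1 : S₁ ≠ ∅) (h2 : S₂ ≠ ∅) :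
    ∃ T : Finset ι, 2 ≤ T.card ∧ Xor' ((T ∩ S₁).card = 1) ((T ∩ S₂).card = 1) := by
  have hsdiff : (S₁ \ S₂).Nonempty ∨ (S₂ \ S₁).Nonempty := by
    simp only [sdiff_nonempty, ← not_and_or]
    exact fun h ↦ h12 (subset_antisymm h.1 h.2)
  rcases hsdiff with ⟨x, hx⟩ | ⟨x, hx⟩
  · rw [mem_sdiff] at hx
    exact exists_xor_card_inter_eq_one_of_mem_sdiff hn hx.1 hx.2 (nonempty_iff_ne_empty.2 h2)
  · rw [mem_sdiff] at hx
    obtain ⟨T, hT, hxor⟩ :=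
      exists_xor_card_inter_eq_one_of_mem_sdiff hn hx.1 hx.2 (nonempty_iff_ne_empty.2 h1)
    exact ⟨T, hT, hxor.symm⟩

/-- For distinct proper nonempty subsets `S₁, S₂` of a finite set `N` with `|N| ≥ 3`,
there exists `T ⊆ N` with `|T| ≥ 2` such that exactly one of `|T ∩ S₁| = 1` and
`|T ∩ S₂| = 1` holds. -/
theorem stmt_5 {ι : Type*} [Fintype ι] [DecidableEq ι]
    (hn : 3 ≤ Fintype.card ι) (S₁ S₂ : Finset ι)
    (h12 : S₁ ≠ S₂) (h1 : S₁ ≠ ∅) (h2 : S₂ ≠ ∅)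
    (h1N : S₁ ≠ Finset.univ) (h2N : S₂ ≠ Finset.univ) :
    ∃ T : Finset ι, 2 ≤ T.card ∧ Xor' ((T ∩ S₁).card = 1) ((T ∩ S₂).card = 1) :=
  stmt_5_general hn S₁ S₂ h12 h1 h2
end

section
/- Let N be a finite set with |N| = n ≥ 2, let v be a utility function on N, and let i, j ∈ N be distinct points such that v(S ∪ {i}) ≤ v(S ∪ {j}) for every subset S ⊆ N∖{i, j}. Then φ_i(v) ≤ φ_j(v). -/
/-! The Shapley value is invariant under relabelling the points, so `φ_j(v) = φ_i(v ∘ σ)` for the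
transposition `σ = (i j)`, and it is monotone in the marginal contributions `v(S ∪ {i}) - v(S)`.
The hypothesis makes each marginal contribution of `i` under `v` at most the one under `v ∘ σ`:
for `j ∉ S` this is the hypothesis at `S`, and for `S = T ∪ {j}` it is the hypothesis at `T`. -/

open Finset

section Shapley

variable {ι : Type*} [DecidableEq ι]

theorem map_swap_of_notMem {i j : ι} {S : Finset ι} (hi : i ∉ S) (hj : j ∉ S) :
    S.map (Equiv.swap i j).toEmbedding = S := by
  ext a
  rw [mem_map_equiv, Equiv.symm_swap]
  rcases eq_or_ne a i with rfl | hai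
  · simp [hi, hj]
  rcases eq_or_ne a j with rfl | haj
  · simp [hi, hj]
  rw [Equiv.swap_apply_of_ne_of_ne hai haj]

variable [Fintype ι]

theorem shapley_le_shapley_of_marginal_le {v w : Finset ι → ℝ} {i : ι}
    (h : ∀ S : Finset ι, i ∉ S → v (insert i S) - v S ≤ w (insert i S) - w S) :
    shapley v i ≤ shapley w i := by
  unfold shapley
  gcongr _ * ∑ k ∈ _, _ * ∑ S ∈ _, ?_ with k _ S hS
  exact h S fun hi => by simpa using (mem_powerset.mp (mem_filter.mp hS).1) hi

theorem shapley_comp_map_equiv (v : Finset ι → ℝ) (σ : ι ≃ ι) (i : ι) :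
    shapley (fun S => v (S.map σ.toEmbedding)) i = shapley v (σ i) := by
  unfold shapley
  congr! 3 with k _
  have hdom : univ.erase (σ i) = (univ.erase i).map σ.toEmbedding := by
    rw [map_erase, map_univ_equiv, Equiv.toEmbedding_apply]
  simp only [← powersetCard_eq_filter, hdom, powersetCard_map, sum_map,
    RelEmbedding.coe_toEmbedding, mapEmbedding_apply, map_insert, Equiv.toEmbedding_apply]

theorem subset_sdiff_pair_of_notMem {i j : ι} {S : Finset ι} (hi : i ∉ S) (hj : j ∉ S) :
    S ⊆ univ \ {i, j} := by
  rw [subset_sdiff, disjoint_insert_right, disjoint_singleton_right]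
  exact ⟨subset_univ S, hi, hj⟩

theorem marginal_le_marginal_map_swap {v : Finset ι → ℝ} {i j : ι}
    (h : ∀ S : Finset ι, S ⊆ univ \ {i, j} → v (insert i S) ≤ v (insert j S))
    {S : Finset ι} (hiS : i ∉ S) :
    v (insert i S) - v S ≤
      v ((insert i S).map (Equiv.swap i j).toEmbedding) -
        v (S.map (Equiv.swap i j).toEmbedding) := by
  by_cases hjS : j ∈ S
  · obtain ⟨T, hjT, rfl⟩ : ∃ T, j ∉ T ∧ S = insert j T :=
      ⟨S.erase j, notMem_erase j S, (insert_erase hjS).symm⟩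
    have hiT : i ∉ T := fun hiT => hiS (mem_insert_of_mem hiT)
    simp only [map_insert, Equiv.toEmbedding_apply, Equiv.swap_apply_left,
      Equiv.swap_apply_right, map_swap_of_notMem hiT hjT]
    rw [insert_comm j i]
    linarith [h T (subset_sdiff_pair_of_notMem hiT hjT)]
  · rw [map_insert, map_swap_of_notMem hiS hjS, Equiv.toEmbedding_apply, Equiv.swap_apply_left]
    linarith [h S (subset_sdiff_pair_of_notMem hiS hjS)]

end Shapley

theorem stmt_6_general {ι : Type*} [Fintype ι] [DecidableEq ι]
    (v : Finset ι → ℝ)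
    (i j : ι)
    (h : ∀ S : Finset ι, S ⊆ Finset.univ \ {i, j} → v (insert i S) ≤ v (insert j S)) :
    shapley v i ≤ shapley v j := by
  calc shapley v i ≤ shapley (fun S => v (S.map (Equiv.swap i j).toEmbedding)) i :=
        shapley_le_shapley_of_marginal_le fun S hiS => marginal_le_marginal_map_swap h hiS
    _ = shapley v j := by rw [shapley_comp_map_equiv, Equiv.swap_apply_left]

/-- If `v(S ∪ {i}) ≤ v(S ∪ {j})` for every `S ⊆ N ∖ {i, j}`, then `φ_i(v) ≤ φ_j(v)`. -/
theorem stmt_6 {ι : Type*} [Fintype ι] [DecidableEq ι]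
    (hn : 2 ≤ Fintype.card ι) (v : Finset ι → ℝ) (hv : v ∅ = 0)
    (i j : ι) (hij : i ≠ j)
    (h : ∀ S : Finset ι, S ⊆ Finset.univ \ {i, j} → v (insert i S) ≤ v (insert j S)) :
    shapley v i ≤ shapley v j :=
  stmt_6_general v i j h
end

section
/- Let N be a finite set with |N| = n, partitioned as N = S_bad ∪ S_clean with S_bad ∩ S_clean = ∅ and |S_clean| = k. Let v be a utility function on N such that for every j ∈ S_clean, every i ∈ S_bad, and every S ⊆ N∖{i, j}, one has v(S ∪ {i}) ≤ v(S ∪ {j}). Then: (a) φ_j(v) ≥ φ_i(v) for every j ∈ S_clean and i ∈ S_bad (so S_clean consists of points with the top-k Shapley values); and (b) v(S_clean) ≥ v(S) for every S ⊆ N with |S| = k (so S_clean attains the maximum utility among all size-k subsets). -/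
/-!
Swapping `i` and `j` maps the coalitions of a given size avoiding `i` bijectively onto those
avoiding `j`. If `j` dominates `i`, the marginal contribution of `i` to a coalition `S` is at most
that of `j` to its swapped image: when `j ∉ S` this is domination itself, and when `j ∈ S` both
reach the same coalition `S ∪ {i}`, `j` starting from `S - j + i`, which domination makes no
larger than `S`. Summing with the Shapley weights gives (a). For (b), trading an element of
`S ∖ S_clean` for one of `S_clean ∖ S` does not decrease `v`, and repeating this turns `S` into
`S_clean`.
-/

open Finset

namespace Finset

variable {ι : Type*} [DecidableEq ι] {i j : ι} {S : Finset ι}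

lemma map_swap_of_notMem_of_notMem (hi : i ∉ S) (hj : j ∉ S) :
    S.map (Equiv.swap i j).toEmbedding = S := by
  ext x
  simp only [mem_map_equiv, Equiv.symm_swap]
  by_cases hxi : x = i
  · subst hxi; simp [hi, hj]
  by_cases hxj : x = j
  · subst hxj; simp [hi, hj]
  rw [Equiv.swap_apply_of_ne_of_ne hxi hxj]

lemma map_swap_of_notMem_of_mem (hi : i ∉ S) (hj : j ∈ S) :
    S.map (Equiv.swap i j).toEmbedding = insert i (S.erase j) := by
  ext x
  simp only [mem_map_equiv, Equiv.symm_swap, mem_insert, mem_erase]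
  by_cases hxi : x = i
  · subst hxi; simp [hj]
  by_cases hxj : x = j
  · subst hxj; simp [hi, hxi]
  rw [Equiv.swap_apply_of_ne_of_ne hxi hxj]
  tauto

end Finset

section Dominates

variable {ι β : Type*} [DecidableEq ι]

def Dominates [Preorder β] (v : Finset ι → β) (j i : ι) : Prop :=
  ∀ S : Finset ι, i ∉ S → j ∉ S → v (insert i S) ≤ v (insert j S)

theorem Dominates.le_insert_erase [Preorder β] {v : Finset ι → β} {i j : ι} {S : Finset ι}
    (h : Dominates v j i) (hi : i ∈ S) (hj : j ∉ S) : v S ≤ v (insert j (S.erase i)) := by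
  conv_lhs => rw [← insert_erase hi]
  exact h _ (notMem_erase i S) (fun h' => hj (mem_of_mem_erase h'))

def marginalSum [Fintype ι] [AddCommGroup β] (v : Finset ι → β) (i : ι) (m : ℕ) : β :=
  ∑ S ∈ (univ.erase i).powerset.filter (fun S => S.card = m), (v (insert i S) - v S)

theorem Dominates.marginalSum_le [Fintype ι] [AddCommGroup β] [PartialOrder β]
    [IsOrderedAddMonoid β] {v : Finset ι → β} {i j : ι} (h : Dominates v j i) (m : ℕ) :
    marginalSum v i m ≤ marginalSum v j m := by
  set σ := Equiv.finsetCongr (Equiv.swap i j)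
  have hmem : ∀ S, S ∈ (univ.erase i).powerset.filter (fun S => S.card = m) ↔
      σ S ∈ (univ.erase j).powerset.filter (fun S => S.card = m) := by
    intro S
    simp [σ, subset_erase, mem_map_equiv]
  calc marginalSum v i m
      ≤ ∑ S ∈ (univ.erase i).powerset.filter (fun S => S.card = m),
          (v (insert j (σ S)) - v (σ S)) := by
        refine sum_le_sum fun S hS => ?_
        have hi : i ∉ S := by simpa [subset_erase] using (mem_filter.1 hS).1
        by_cases hj : j ∈ S
        · have hσ : σ S = insert i (S.erase j) := map_swap_of_notMem_of_mem hi hj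
          have hinsert : insert j (σ S) = insert i S := by
            rw [hσ, insert_comm, insert_erase hj]
          have hle : v (σ S) ≤ v S := by
            rw [hσ]
            simpa only [insert_erase hj] using
              h (S.erase j) (fun h' => hi (mem_of_mem_erase h')) (notMem_erase j S)
          rw [hinsert]
          exact sub_le_sub_left hle _
        · rw [show σ S = S from map_swap_of_notMem_of_notMem hi hj]
          exact sub_le_sub_right (h S hi hj) _
    _ = marginalSum v j m := sum_equiv σ hmem (fun _ _ => rfl)

theorem Dominates.shapley_le [Fintype ι] {v : Finset ι → ℝ} {i j : ι} (h : Dominates v j i) :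
    shapley v i ≤ shapley v j := by
  unfold shapley
  gcongr with m
  exact h.marginalSum_le (m - 1)

theorem le_of_card_eq_of_dominates [Preorder β] {v : Finset ι → β} {T : Finset ι}
    (hT : ∀ j ∈ T, ∀ i ∉ T, Dominates v j i) (S : Finset ι) (hS : S.card = T.card) :
    v S ≤ v T := by
  by_cases hTS : T ⊆ S
  · rw [eq_of_subset_of_card_le hTS hS.le]
  obtain ⟨j, hjT, hjS⟩ := not_subset.1 hTS
  obtain ⟨i, hiS, hiT⟩ : ∃ i ∈ S, i ∉ T :=
    not_subset.1 fun hST => hTS (eq_of_subset_of_card_le hST hS.ge).ge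
  have hcard : (insert j (S.erase i)).card = T.card := by
    rw [card_insert_of_notMem (fun h => hjS (mem_of_mem_erase h)), card_erase_of_mem hiS, hS]
    have := card_pos.2 ⟨i, hiS⟩
    omega
  calc v S ≤ v (insert j (S.erase i)) := (hT j hjT i hiT).le_insert_erase hiS hjS
    _ ≤ v T := le_of_card_eq_of_dominates hT _ hcard
termination_by (T \ S).card
decreasing_by
  refine card_lt_card ⟨fun x hx => ?_, not_subset.2 ⟨j, by simp [hjT, hjS], by simp⟩⟩
  simp only [mem_sdiff, mem_insert, mem_erase, not_or] at hx ⊢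
  exact ⟨hx.1, fun hxS => hx.2.2 ⟨fun hxi => hiT (hxi ▸ hx.1), hxS⟩⟩

end Dominates

theorem stmt_7_general {ι : Type*} [Fintype ι] [DecidableEq ι]
    (Sbad Sclean : Finset ι)
    (hunion : Sbad ∪ Sclean = Finset.univ) (hdisj : Sbad ∩ Sclean = ∅)
    (k : ℕ) (hk : Sclean.card = k)
    (v : Finset ι → ℝ)
    (hcond : ∀ j ∈ Sclean, ∀ i ∈ Sbad, ∀ S : Finset ι,
      S ⊆ Finset.univ \ {i, j} → v (insert i S) ≤ v (insert j S)) :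
    (∀ j ∈ Sclean, ∀ i ∈ Sbad, shapley v i ≤ shapley v j) ∧
      (∀ S : Finset ι, S.card = k → v S ≤ v Sclean) := by
  obtain rfl : Sbad = Scleanᶜ :=
    IsCompl.eq_compl ⟨disjoint_iff.2 hdisj, codisjoint_iff.2 hunion⟩
  have hdom : ∀ j ∈ Sclean, ∀ i ∉ Sclean, Dominates v j i := fun j hj i hi S hiS hjS =>
    hcond j hj i (mem_compl.2 hi) S (subset_sdiff.2 ⟨subset_univ S, by simp [hiS, hjS]⟩)
  exact ⟨fun j hj i hi => (hdom j hj i (mem_compl.1 hi)).shapley_le,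
    fun S hS => le_of_card_eq_of_dominates hdom S (hS.trans hk.symm)⟩

/-- If `N = S_bad ∪ S_clean` is a disjoint partition with `|S_clean| = k`, and every clean
point dominates every bad point (`v(S ∪ {i}) ≤ v(S ∪ {j})` for all `S ⊆ N ∖ {i,j}`,
`i ∈ S_bad`, `j ∈ S_clean`), then (a) clean points have the top-`k` Shapley values and
(b) `S_clean` attains the maximum utility among all size-`k` subsets. -/
theorem stmt_7 {ι : Type*} [Fintype ι] [DecidableEq ι]
    (Sbad Sclean : Finset ι)
    (hunion : Sbad ∪ Sclean = Finset.univ) (hdisj : Sbad ∩ Sclean = ∅)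
    (k : ℕ) (hk : Sclean.card = k)
    (v : Finset ι → ℝ) (hv : v ∅ = 0)
    (hcond : ∀ j ∈ Sclean, ∀ i ∈ Sbad, ∀ S : Finset ι,
      S ⊆ Finset.univ \ {i, j} → v (insert i S) ≤ v (insert j S)) :
    (∀ j ∈ Sclean, ∀ i ∈ Sbad, shapley v i ≤ shapley v j) ∧
      (∀ S : Finset ι, S.card = k → v S ≤ v Sclean) :=
  stmt_7_general Sbad Sclean hunion hdisj k hk v hcond
end

section
/- Let N be a finite set with |N| = n ≥ 1, let v : 2^N → ℝ be a set function with Var_{S∼Unif(N)}(v(S)) > 0, and let ρ ∈ [0, 1). Let M denote the set of all MTM set functions on N, and for ṽ ∈ M define the normalized fitting residual R̄_v(ṽ) = E_{S∼Unif(N)}[(v(S) − ṽ(S))²] / Var_{S∼Unif(N)}(v(S)). Then inf_{ṽ ∈ M} R̄_v(ṽ) ≤ (1/(1−ρ²)) · (1 − cor_ρ(v)), where cor_ρ(v) = (E_{(S,S′)∼ρ-corr(N)}[v(S)·v(S′)] − (E_{S∼Unif(N)}[v(S)])²) / Var_{S∼Unif(N)}(v(S)) is the ρ-consistency index of v. 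-/
/-!
Expand `v` in the Walsh basis `χ_T(S) = (-1) ^ #(T ∩ S)`, which is orthonormal for the uniform
distribution, so that `E[v²] = Σ_T v̂(T)²`. Up to normalisation the `ρ`-correlated
kernel is `Σ_T ρ ^ #T χ_T(S) χ_T(S')`, so `E_ρ[v(S) v(S')] = Σ_T ρ ^ #T v̂(T)²`. The truncation of
the expansion to `#T ≤ 1` is affine in the indicator of `S`, hence MTM with `f = id`, and its
residual `Σ_{#T ≥ 2} v̂(T)²` is at most
`(1 - ρ²)⁻¹ Σ_T (1 - ρ ^ #T) v̂(T)² = (1 - ρ²)⁻¹ (Var v - (E_ρ[v(S) v(S')] - E[v]²))`.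
-/

open Finset

/-- Expectation of a set function under the uniform distribution over subsets of `ι`. -/
noncomputable def expectU {ι : Type*} [Fintype ι] [DecidableEq ι]
    (u : Finset ι → ℝ) : ℝ :=
  (2 ^ Fintype.card ι : ℝ)⁻¹ * ∑ S : Finset ι, u S

/-- Variance of a set function under the uniform distribution over subsets of `ι`. -/
noncomputable def varU {ι : Type*} [Fintype ι] [DecidableEq ι]
    (u : Finset ι → ℝ) : ℝ :=
  expectU (fun S => u S ^ 2) - expectU u ^ 2

/-- The `ρ`-correlated joint probability `P_ρ(S, S')` on pairs of subsets of `ι`. -/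
noncomputable def pCorr {ι : Type*} [Fintype ι] [DecidableEq ι]
    (ρ : ℝ) (S S' : Finset ι) : ℝ :=
  (2 ^ Fintype.card ι : ℝ)⁻¹ *
    ∏ i : ι, if (i ∈ S ↔ i ∈ S') then (1 + ρ) / 2 else (1 - ρ) / 2

/-- `E_{(S,S') ∼ ρ-corr(N)}[v(S)·v(S')]`. -/
noncomputable def corrExpect {ι : Type*} [Fintype ι] [DecidableEq ι]
    (ρ : ℝ) (v : Finset ι → ℝ) : ℝ :=
  ∑ S : Finset ι, ∑ S' : Finset ι, pCorr ρ S S' * (v S * v S')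

/-- A set function is monotonically transformed modular (MTM) if it has the form
`vtil(S) = f(w₀ + Σ_{i∈S} w_i)` with `f` monotonically non-decreasing. -/
def IsMTM {ι : Type*} [Fintype ι] [DecidableEq ι] (vtil : Finset ι → ℝ) : Prop :=
  ∃ f : ℝ → ℝ, ∃ w₀ : ℝ, ∃ w : ι → ℝ,
    Monotone f ∧ ∀ S : Finset ι, vtil S = f (w₀ + ∑ i ∈ S, w i)

theorem Finset.sum_prod_eq_prod_one_add {ι R : Type*} [Fintype ι] [CommSemiring R]
    (g : ι → R) : ∑ T : Finset ι, ∏ i ∈ T, g i = ∏ i, (1 + g i) := by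
  rw [prod_one_add, powerset_univ]

namespace SetFunction

variable {ι : Type*} [DecidableEq ι]

def walsh (T S : Finset ι) : ℝ := ∏ i ∈ T, if i ∈ S then -1 else 1

lemma walsh_eq_neg_one_pow (T S : Finset ι) : walsh T S = (-1) ^ #(T ∩ S) := by
  rw [walsh, ← prod_const, ← prod_ite_mem]

lemma walsh_comm (T S : Finset ι) : walsh T S = walsh S T := by
  rw [walsh_eq_neg_one_pow, walsh_eq_neg_one_pow, inter_comm]

variable [Fintype ι]

lemma expectU_nonneg {u : Finset ι → ℝ} (hu : ∀ S, 0 ≤ u S) : 0 ≤ expectU u :=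
  mul_nonneg (by positivity) (sum_nonneg fun S _ => hu S)

lemma expectU_sum {α : Type*} (D : Finset α) (u : α → Finset ι → ℝ) :
    expectU (fun S => ∑ a ∈ D, u a S) = ∑ a ∈ D, expectU (u a) := by
  simp only [expectU, mul_sum]
  exact sum_comm

lemma expectU_const_mul (c : ℝ) (u : Finset ι → ℝ) :
    expectU (fun S => c * u S) = c * expectU u := by
  simp only [expectU, ← mul_sum]
  ring

lemma sum_walsh_mul_walsh (T U : Finset ι) :
    ∑ S, walsh S T * walsh S U = if T = U then 2 ^ Fintype.card ι else 0 := by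
  simp only [walsh, ← prod_mul_distrib, sum_prod_eq_prod_one_add]
  split_ifs with hTU
  · subst hTU
    rw [← card_univ, ← prod_const]
    exact prod_congr rfl fun i _ => by split_ifs <;> norm_num
  · obtain ⟨i, hi⟩ : ∃ i, ¬(i ∈ T ↔ i ∈ U) := by
      by_contra! h
      exact hTU (ext h)
    exact prod_eq_zero (mem_univ i) (by by_cases hT : i ∈ T <;> simp_all)

lemma expectU_walsh_mul_walsh (T U : Finset ι) :
    expectU (fun S => walsh T S * walsh U S) = if T = U then 1 else 0 := by
  simp only [expectU, walsh_comm T, walsh_comm U, sum_walsh_mul_walsh]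
  split_ifs <;> simp

noncomputable def walshCoeff (v : Finset ι → ℝ) (T : Finset ι) : ℝ :=
  expectU (fun S => v S * walsh T S)

lemma sum_walshCoeff_mul_walsh (v : Finset ι → ℝ) (S : Finset ι) :
    ∑ T, walshCoeff v T * walsh T S = v S := by
  simp only [walshCoeff, expectU, sum_mul, ← mul_sum, mul_assoc]
  rw [sum_comm]
  simp only [← mul_sum, sum_walsh_mul_walsh, mul_ite, mul_zero, sum_ite_eq', mem_univ, if_true]
  field_simp

lemma expectU_sq_sum_walsh (a : Finset ι → ℝ) (D : Finset (Finset ι)) :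
    expectU (fun S => (∑ T ∈ D, a T * walsh T S) ^ 2) = ∑ T ∈ D, a T ^ 2 := by
  have hexpand : ∀ S, (∑ T ∈ D, a T * walsh T S) ^ 2 =
      ∑ T ∈ D, ∑ U ∈ D, a T * a U * (walsh T S * walsh U S) := fun S => by
    rw [sq, sum_mul_sum]
    exact sum_congr rfl fun T _ => sum_congr rfl fun U _ => by ring
  simp only [hexpand, expectU_sum, expectU_const_mul, expectU_walsh_mul_walsh, mul_ite, mul_one,
    mul_zero, sum_ite_eq, sq]
  exact sum_congr rfl fun T hT => if_pos hT

theorem expectU_sq_eq_sum_walshCoeff_sq (v : Finset ι → ℝ) :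
    expectU (fun S => v S ^ 2) = ∑ T, walshCoeff v T ^ 2 := by
  simpa only [sum_walshCoeff_mul_walsh] using expectU_sq_sum_walsh (walshCoeff v) univ

theorem expectU_sq_sub_sum_walshCoeff (v : Finset ι → ℝ) (D : Finset (Finset ι)) :
    expectU (fun S => (v S - ∑ T ∈ D, walshCoeff v T * walsh T S) ^ 2) =
      ∑ T ∈ Dᶜ, walshCoeff v T ^ 2 := by
  have hsplit : ∀ S, v S - ∑ T ∈ D, walshCoeff v T * walsh T S =
      ∑ T ∈ Dᶜ, walshCoeff v T * walsh T S := fun S => by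
    rw [sub_eq_iff_eq_add, sum_compl_add_sum, sum_walshCoeff_mul_walsh]
  simp only [hsplit, expectU_sq_sum_walsh]

lemma pCorr_eq_sum_walsh (ρ : ℝ) (S S' : Finset ι) :
    pCorr ρ S S' = (2 ^ Fintype.card ι : ℝ)⁻¹ * (2 ^ Fintype.card ι : ℝ)⁻¹ *
      ∑ T, ρ ^ #T * (walsh T S * walsh T S') := by
  have hfactor : ∀ i, 1 + ρ * ((if i ∈ S then -1 else 1) * (if i ∈ S' then -1 else 1)) =
      2 * if (i ∈ S ↔ i ∈ S') then (1 + ρ) / 2 else (1 - ρ) / 2 := fun i => by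
    by_cases hS : i ∈ S <;> by_cases hS' : i ∈ S' <;> simp [hS, hS'] <;> ring
  have hterm : ∀ T : Finset ι, ρ ^ #T * (walsh T S * walsh T S') =
      ∏ i ∈ T, ρ * ((if i ∈ S then -1 else 1) * (if i ∈ S' then -1 else 1)) := fun T => by
    rw [walsh, walsh, prod_mul_distrib, prod_mul_distrib, prod_const]
  rw [sum_congr rfl fun T _ => hterm T, sum_prod_eq_prod_one_add,
    prod_congr rfl fun i _ => hfactor i, prod_mul_distrib, prod_const, card_univ, pCorr]
  field_simp

theorem corrExpect_eq_sum_walshCoeff_sq (ρ : ℝ) (v : Finset ι → ℝ) :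
    corrExpect ρ v = ∑ T, ρ ^ #T * walshCoeff v T ^ 2 := by
  simp only [corrExpect, pCorr_eq_sum_walsh, walshCoeff, expectU, sq, mul_sum, sum_mul]
  conv_rhs => rw [sum_comm]
  refine sum_congr rfl fun S _ => ?_
  conv_rhs => rw [sum_comm]
  exact sum_congr rfl fun S _ => sum_congr rfl fun S' _ => by ring

lemma filter_card_le_one_eq :
    univ.filter (fun T : Finset ι => #T ≤ 1) = insert ∅ (univ.image singleton) := by
  ext T
  simp only [mem_filter, mem_univ, true_and, mem_insert, mem_image]
  constructor
  · intro hT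
    rcases Nat.le_one_iff_eq_zero_or_eq_one.mp hT with hT | hT
    · exact Or.inl (card_eq_zero.mp hT)
    · obtain ⟨i, rfl⟩ := card_eq_one.mp hT
      exact Or.inr ⟨i, rfl⟩
  · rintro (rfl | ⟨i, -, rfl⟩) <;> simp

lemma sum_card_le_one_mul_walsh (a : Finset ι → ℝ) (S : Finset ι) :
    ∑ T ∈ univ.filter (fun T : Finset ι => #T ≤ 1), a T * walsh T S =
      (a ∅ + ∑ i, a {i}) + ∑ i ∈ S, -2 * a {i} := by
  have hsingleton : ∀ i, a {i} * walsh {i} S = a {i} + if i ∈ S then -2 * a {i} else 0 :=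
    fun i => by simp only [walsh, prod_singleton]; split_ifs <;> ring
  rw [filter_card_le_one_eq, sum_insert (by simp), sum_image fun i _ j _ => singleton_inj.mp]
  simp only [hsingleton, sum_add_distrib, sum_ite_mem, univ_inter]
  simp [walsh, add_assoc]

lemma isMTM_sum_card_le_one_mul_walsh (a : Finset ι → ℝ) :
    IsMTM fun S => ∑ T ∈ univ.filter (fun T : Finset ι => #T ≤ 1), a T * walsh T S :=
  ⟨id, _, _, monotone_id, sum_card_le_one_mul_walsh a⟩

lemma one_sub_sq_mul_sum_compl_le {ρ : ℝ} (hρ0 : 0 ≤ ρ) (hρ1 : ρ ≤ 1) (c : Finset ι → ℝ) :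
    (1 - ρ ^ 2) * ∑ T ∈ (univ.filter (fun T : Finset ι => #T ≤ 1))ᶜ, c T ^ 2 ≤
      ∑ T, (1 - ρ ^ #T) * c T ^ 2 := by
  rw [mul_sum]
  calc ∑ T ∈ (univ.filter (fun T : Finset ι => #T ≤ 1))ᶜ, (1 - ρ ^ 2) * c T ^ 2
      ≤ ∑ T ∈ (univ.filter (fun T : Finset ι => #T ≤ 1))ᶜ, (1 - ρ ^ #T) * c T ^ 2 := by
        refine sum_le_sum fun T hT => ?_
        have hcard : 2 ≤ #T := by simpa [Nat.lt_iff_add_one_le] using hT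
        gcongr ?_ * _
        exact sub_le_sub_left (pow_le_pow_of_le_one hρ0 hρ1 hcard) 1
    _ ≤ ∑ T, (1 - ρ ^ #T) * c T ^ 2 :=
        sum_le_sum_of_subset_of_nonneg (subset_univ _) fun T _ _ =>
          mul_nonneg (sub_nonneg.mpr (pow_le_one₀ hρ0 hρ1)) (sq_nonneg _)

end SetFunction

open SetFunction

theorem stmt_10_general {ι : Type*} [Fintype ι] [DecidableEq ι]
    (v : Finset ι → ℝ) (hvar : 0 < varU v)
    (ρ : ℝ) (hρ0 : 0 ≤ ρ) (hρ1 : ρ < 1) :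
    sInf {r : ℝ | ∃ vtil : Finset ι → ℝ, IsMTM vtil ∧
        r = expectU (fun S => (v S - vtil S) ^ 2) / varU v} ≤
      (1 / (1 - ρ ^ 2)) * (1 - (corrExpect ρ v - expectU v ^ 2) / varU v) := by
  have hρ2 : 0 < 1 - ρ ^ 2 := by nlinarith
  have hgap : varU v - (corrExpect ρ v - expectU v ^ 2) =
      ∑ T, (1 - ρ ^ #T) * walshCoeff v T ^ 2 := by
    rw [varU, expectU_sq_eq_sum_walshCoeff_sq, corrExpect_eq_sum_walshCoeff_sq]
    simp only [sub_mul, one_mul, sum_sub_distrib]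
    ring
  have hbdd : BddBelow {r : ℝ | ∃ vtil : Finset ι → ℝ, IsMTM vtil ∧
      r = expectU (fun S => (v S - vtil S) ^ 2) / varU v} := by
    refine ⟨0, ?_⟩
    rintro r ⟨vtil, -, rfl⟩
    exact div_nonneg (expectU_nonneg fun S => sq_nonneg _) hvar.le
  refine (csInf_le hbdd ⟨_, isMTM_sum_card_le_one_mul_walsh (walshCoeff v), rfl⟩).trans ?_
  rw [expectU_sq_sub_sum_walshCoeff, one_sub_div hvar.ne', hgap, one_div_mul_eq_div,
    le_div_iff₀ hρ2, div_mul_eq_mul_div, div_le_div_iff_of_pos_right hvar, mul_comm]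
  exact one_sub_sq_mul_sum_compl_le hρ0 hρ1.le _

/-- The infimum over MTM functions `vtil` of the normalized fitting residual
`E[(v(S) − vtil(S))²] / Var(v(S))` is at most `(1/(1−ρ²)) · (1 − cor_ρ(v))`, where
`cor_ρ(v)` is the `ρ`-consistency index of `v`. -/
theorem stmt_10 {ι : Type*} [Fintype ι] [DecidableEq ι]
    (hn : 1 ≤ Fintype.card ι)
    (v : Finset ι → ℝ) (hvar : 0 < varU v)
    (ρ : ℝ) (hρ0 : 0 ≤ ρ) (hρ1 : ρ < 1) :
    sInf {r : ℝ | ∃ vtil : Finset ι → ℝ, IsMTM vtil ∧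
        r = expectU (fun S => (v S - vtil S) ^ 2) / varU v} ≤
      (1 / (1 - ρ ^ 2)) * (1 - (corrExpect ρ v - expectU v ^ 2) / varU v) :=
  stmt_10_general v hvar ρ hρ0 hρ1
end
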